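/- arXiv:1410.0309 — 5 statements merged into one kernel-verified Lean document; each statement's English description precedes it below -/
import Mathlib

section
/- Let o be the origin in the plane, and let s_i, s_j be points with ‖s_i‖ > 3, ‖s_j‖ > 3, and ‖s_i‖ ≥ ‖s_j‖. Let s'_i and s'_j be the radial projections of s_i and s_j onto the circle of radius 3 centered at o (i.e., s'_i = 3·s_i/‖s_i‖ and s'_j = 3·s_j/‖s_j‖). Suppose dist(s_i, s_j) ≥ ‖s_i‖ − 1. Then dist(s'_i, s'_j) ≥ 2. -/
/-! Write `a = ‖sᵢ‖ ≥ b = ‖sⱼ‖ > 3` and `t = ⟪sᵢ, sⱼ⟫`. Squaring `‖sᵢ - sⱼ‖ ≥ a - 1` gives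
`2t ≤ b² + 2a - 1`, while the projections satisfy `‖s'ᵢ - s'ⱼ‖² = 18 - 18 t / (a b)`. So it suffices
that `9 (b² + 2a - 1) ≤ 14 a b`; the difference is increasing in `a` and equals `(5b - 3)(b - 3) > 0`
at `a = b`. -/

open RealInnerProductSpace

section RadialProjection

variable {E : Type*} [NormedAddCommGroup E] [InnerProductSpace ℝ E]

theorem two_inner_le_of_le_norm_sub {x y : E} {d : ℝ} (hd : 0 ≤ d) (h : d ≤ ‖x - y‖) :
    2 * ⟪x, y⟫ ≤ ‖x‖ ^ 2 + ‖y‖ ^ 2 - d ^ 2 := by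
  have hsq : d ^ 2 ≤ ‖x - y‖ ^ 2 := pow_le_pow_left₀ hd h 2
  rw [norm_sub_sq_real] at hsq
  linarith

theorem norm_smul_div_norm_sub_smul_div_norm_sq (r : ℝ) {x y : E} (hx : x ≠ 0) (hy : y ≠ 0) :
    ‖(r / ‖x‖) • x - (r / ‖y‖) • y‖ ^ 2 = 2 * r ^ 2 - 2 * r ^ 2 * ⟪x, y⟫ / (‖x‖ * ‖y‖) := by
  have hx' : ‖x‖ ≠ 0 := norm_ne_zero_iff.mpr hx
  have hy' : ‖y‖ ≠ 0 := norm_ne_zero_iff.mpr hy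
  rw [norm_sub_sq_real, norm_smul, norm_smul, real_inner_smul_left, real_inner_smul_right,
    Real.norm_eq_abs, Real.norm_eq_abs, abs_div, abs_div, abs_norm, abs_norm,
    div_mul_cancel₀ _ hx', div_mul_cancel₀ _ hy', sq_abs]
  field_simp
  ring

end RadialProjection

theorem stmt_5 (si sj : EuclideanSpace ℝ (Fin 2))
    (hi : ‖si‖ > 3) (hj : ‖sj‖ > 3) (hij : ‖si‖ ≥ ‖sj‖)
    (h : dist si sj ≥ ‖si‖ - 1) :
    dist ((3 / ‖si‖) • si) ((3 / ‖sj‖) • sj) ≥ 2 := by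
  have hsi : si ≠ 0 := norm_pos_iff.mp (by linarith)
  have hsj : sj ≠ 0 := norm_pos_iff.mp (by linarith)
  have hinner : 2 * ⟪si, sj⟫ ≤ ‖si‖ ^ 2 + ‖sj‖ ^ 2 - (‖si‖ - 1) ^ 2 :=
    two_inner_le_of_le_norm_sub (by linarith) (by rwa [← dist_eq_norm])
  have hab : 0 < ‖si‖ * ‖sj‖ := by positivity
  have hcos : 9 * ⟪si, sj⟫ / (‖si‖ * ‖sj‖) ≤ 7 := by
    rw [div_le_iff₀ hab]
    linarith [mul_pos (by linarith : (0 : ℝ) < 5 * ‖sj‖ - 3) (by linarith : (0 : ℝ) < ‖sj‖ - 3),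
      mul_nonneg (sub_nonneg.mpr hij) (by linarith : (0 : ℝ) ≤ 14 * ‖sj‖ - 18)]
  have hsq : 4 ≤ dist ((3 / ‖si‖) • si) ((3 / ‖sj‖) • sj) ^ 2 := by
    rw [dist_eq_norm, norm_smul_div_norm_sub_smul_div_norm_sq 3 hsi hsj]
    linarith [show 2 * 3 ^ 2 * ⟪si, sj⟫ / (‖si‖ * ‖sj‖) = 2 * (9 * ⟪si, sj⟫ / (‖si‖ * ‖sj‖)) by
      ring]
  exact (pow_le_pow_iff_left₀ zero_le_two dist_nonneg two_ne_zero).mp (by linarith)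
end

section
/- Let o be the origin in the plane, s_i a point with ‖s_i‖ ≤ 3, s_j a point with ‖s_j‖ > 3, and u_j a point with ‖u_j‖ ≤ 1. Let s'_j = 3·s_j/‖s_j‖. If dist(s_i, s_j) ≥ dist(s_j, u_j), then dist(s_i, s'_j) ≥ 2, and hence the unit disks centered at s_i and s'_j are internally disjoint. -/
open Metric

theorem stmt_7 (si sj uj : EuclideanSpace ℝ (Fin 2))
    (hi : ‖si‖ ≤ 3) (hj : ‖sj‖ > 3) (hu : ‖uj‖ ≤ 1)
    (h : dist si sj ≥ dist sj uj) :
    dist si ((3 / ‖sj‖) • sj) ≥ 2 ∧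
      Disjoint (ball si 1) (ball ((3 / ‖sj‖) • sj) 1) := by
  have hpos : (0:ℝ) < ‖sj‖ := lt_trans (by norm_num) hj
  have hdjj : dist sj ((3 / ‖sj‖) • sj) = ‖sj‖ - 3 := by
    have : sj - (3 / ‖sj‖) • sj = (1 - 3 / ‖sj‖) • sj := by
      rw [sub_smul, one_smul]
    rw [dist_eq_norm, this, norm_smul, Real.norm_eq_abs,
      abs_of_nonneg (by rw [sub_nonneg]; exact (div_le_one hpos).2 hj.le)]
    field_simp
  have h1 : ‖sj‖ - 1 ≤ dist si sj := by
    have := dist_triangle sj uj 0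
    simp only [dist_zero_right] at this
    have h2 : ‖sj‖ - ‖uj‖ ≤ dist sj uj := by
      rw [dist_eq_norm]
      simpa using norm_sub_norm_le sj uj
    linarith
  have hmain : dist si ((3 / ‖sj‖) • sj) ≥ 2 := by
    have := dist_triangle si ((3 / ‖sj‖) • sj) sj
    rw [dist_comm ((3 / ‖sj‖) • sj) sj, hdjj] at this
    linarith
  exact ⟨hmain, ball_disjoint_ball (by linarith)⟩
end

section
/- Let S be a finite set of at least 3 points in the plane, let m be a Hamiltonian cycle on S minimizing (lexicographically) the decreasingly-sorted sequence of edge lengths, and let xy be an edge of m with x = (-1,0), y = (1,0). If u is a point of S in the closed unit disk centered at the origin with u ≠ x, u ≠ y, and s is the neighbor of u along m on the side of x (the predecessor of u when traversing m from x through y), with s ≠ y, then dist(s, x) ≥ dist(s, u) and dist(s, x) ≥ 2. -/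
open Metric

noncomputable section

/-- A Hamiltonian cycle on the point set `S`: a cyclic ordering (an injection from
`ZMod S.card`, hence a bijection onto `S`) of all points of `S`. -/
def IsHamCycle (S : Finset (EuclideanSpace ℝ (Fin 2)))
    (c : ZMod S.card → EuclideanSpace ℝ (Fin 2)) : Prop :=
  Function.Injective c ∧ ∀ i, c i ∈ S

/-- The distance sequence of a Hamiltonian cycle: edge lengths sorted decreasingly. -/
def dseq (S : Finset (EuclideanSpace ℝ (Fin 2)))
    (c : ZMod S.card → EuclideanSpace ℝ (Fin 2)) : List ℝ :=
  ((List.finRange S.card).map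
    (fun i => dist (c ((i : ℕ) : ZMod S.card)) (c (((i : ℕ) : ZMod S.card) + 1)))).insertionSort
    (· ≥ ·)

/-- `m` is a Hamiltonian cycle on `S` minimizing lexicographically the
decreasingly-sorted sequence of its edge lengths. -/
def IsMinHamCycle (S : Finset (EuclideanSpace ℝ (Fin 2)))
    (m : ZMod S.card → EuclideanSpace ℝ (Fin 2)) : Prop :=
  IsHamCycle S m ∧ ∀ c, IsHamCycle S c → ¬ List.Lex (· < ·) (dseq S c) (dseq S m)

/-!
Replacing the edges `su` and `xy` of `m` by `sx` and `uy` (and reversing the path from `u` to `x`)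
gives another Hamiltonian cycle whose multiset of edge lengths differs from that of `m` only in
`{|sx|, |uy|}` replacing `{|su|, |xy|}`. Decreasingly sorted sequences of two such multisets
compare lexicographically like the maxima of the exchanged pairs, so minimality of `m` forces
`max |su| |xy| ≤ max |sx| |uy|`. Since `u` lies in the closed unit disk and `u ≠ x = -y`,
`|uy| < 2 = |xy|`, so the right-hand maximum is `|sx|`, which is therefore at least `2` and `|su|`.
-/

namespace Multiset

variable {α : Type*} [LinearOrder α]

theorem sort_ge_eq_cons_erase {M : Multiset α} {a : α} (ha : a ∈ M) (hmax : ∀ z ∈ M, z ≤ a) :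
    M.sort (· ≥ ·) = a :: (M.erase a).sort (· ≥ ·) := by
  conv_lhs => rw [← cons_erase ha]
  exact sort_cons _ _ _ fun z hz => hmax z (mem_of_mem_erase hz)

theorem exists_sort_ge_eq_cons {M : Multiset α} (hM : M ≠ 0) :
    ∃ a ∈ M, (∀ z ∈ M, z ≤ a) ∧ M.sort (· ≥ ·) = a :: (M.erase a).sort (· ≥ ·) := by
  obtain ⟨a, ha, hmax⟩ := M.toFinset.exists_max_image id (by simpa using hM)
  simp only [mem_toFinset, id] at ha hmax
  exact ⟨a, ha, hmax, sort_ge_eq_cons_erase ha hmax⟩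

theorem lex_sort_ge_add_of_forall_lt {P Q : Multiset α} {q : α} (hcard : card P = card Q)
    (hq : q ∈ Q) (hP : ∀ p ∈ P, p < q) (C : Multiset α) :
    List.Lex (· < ·) ((C + P).sort (· ≥ ·)) ((C + Q).sort (· ≥ ·)) := by
  induction C using strongInductionOn with
  | ih C ih =>
    have hCQ : C + Q ≠ 0 := card_pos.mp (card_pos_iff_exists_mem.mpr ⟨q, mem_add.mpr (.inr hq)⟩)
    have hCP : C + P ≠ 0 :=
      card_pos.mp (by rw [card_add, hcard, ← card_add]; exact card_pos.mpr hCQ)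
    obtain ⟨a, haCP, -, hsortP⟩ := exists_sort_ge_eq_cons hCP
    obtain ⟨b, -, hbmax, hsortQ⟩ := exists_sort_ge_eq_cons hCQ
    rw [hsortP, hsortQ]
    rcases lt_or_ge a b with hab | hba
    · exact .rel hab
    have haC : a ∈ C := (mem_add.mp haCP).resolve_right fun haP =>
      (hP a haP).not_ge ((hbmax q (mem_add.mpr (Or.inr hq))).trans hba)
    obtain rfl : a = b := le_antisymm (hbmax a (mem_add.mpr (Or.inl haC))) hba
    rw [erase_add_left_pos _ haC, erase_add_left_pos _ haC]
    exact .cons (ih _ (erase_lt.mpr haC))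

theorem lex_sort_ge_cons_cons_of_max_lt {p₁ p₂ q₁ q₂ : α} (h : max p₁ p₂ < max q₁ q₂)
    (R : Multiset α) :
    List.Lex (· < ·) ((p₁ ::ₘ p₂ ::ₘ R).sort (· ≥ ·)) ((q₁ ::ₘ q₂ ::ₘ R).sort (· ≥ ·)) := by
  have hq : max q₁ q₂ ∈ ({q₁, q₂} : Multiset α) := by
    rcases max_choice q₁ q₂ with h | h <;> simp [h]
  have hP : ∀ p ∈ ({p₁, p₂} : Multiset α), p < max q₁ q₂ := by
    simp only [insert_eq_cons, mem_cons, mem_singleton, forall_eq_or_imp, forall_eq]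
    exact ⟨(le_max_left _ _).trans_lt h, (le_max_right _ _).trans_lt h⟩
  simpa [add_comm R] using lex_sort_ge_add_of_forall_lt (by simp) hq hP R

end Multiset

section Cycles

variable {α : Type*} [PseudoMetricSpace α] {n : ℕ}

def cycleDists (c : ZMod n → α) : Multiset ℝ :=
  (Multiset.range n).map fun t : ℕ => dist (c t) (c (t + 1))

theorem ZMod.map_natCast_range [NeZero n] :
    (Multiset.range n).map (Nat.cast : ℕ → ZMod n) = Finset.univ.val := by
  refine (Multiset.Nodup.ext ?_ Finset.univ.nodup).mpr fun k => ?_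
  · exact (Multiset.nodup_range n).map_on fun s hs t ht h => by
      rw [← ZMod.val_cast_of_lt (Multiset.mem_range.mp hs),
        ← ZMod.val_cast_of_lt (Multiset.mem_range.mp ht), h]
  · simp only [Finset.mem_val, Finset.mem_univ, iff_true, Multiset.mem_map, Multiset.mem_range]
    exact ⟨k.val, k.val_lt, k.natCast_zmod_val⟩

theorem cycleDists_eq_map_univ [NeZero n] (c : ZMod n → α) :
    cycleDists c = Finset.univ.val.map fun k => dist (c k) (c (k + 1)) := by
  rw [← ZMod.map_natCast_range, Multiset.map_map]
  rfl

theorem cycleDists_comp_add_right [NeZero n] (c : ZMod n → α) (a : ZMod n) :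
    cycleDists (fun k => c (k + a)) = cycleDists c := by
  rw [cycleDists_eq_map_univ, cycleDists_eq_map_univ]
  conv_rhs => rw [← Multiset.map_univ_val_equiv (Equiv.addRight a), Multiset.map_map]
  simp only [Function.comp_def, Equiv.coe_addRight, add_right_comm _ a 1]

/-- Precomposing a cycle with `reverseSegment d` replaces its edges `{0, 1}`, `{d, d + 1}` by
`{0, d}`, `{1, d + 1}` (the 2-opt move). -/
def reverseSegment (d : ℕ) (k : ZMod n) : ZMod n :=
  if 1 ≤ k.val ∧ k.val ≤ d then ((d + 1 - k.val : ℕ) : ZMod n) else k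

theorem reverseSegment_eq_self {d : ℕ} {k : ZMod n} (hk : k.val = 0 ∨ d < k.val) :
    reverseSegment d k = k :=
  if_neg (by omega)

theorem reverseSegment_natCast {d t : ℕ} (hd : d < n) (ht₁ : 1 ≤ t) (ht₂ : t ≤ d) :
    reverseSegment d (t : ZMod n) = ((d + 1 - t : ℕ) : ZMod n) := by
  rw [reverseSegment, ZMod.val_cast_of_lt (by omega), if_pos ⟨ht₁, ht₂⟩]

theorem reverseSegment_natCast_add_one {d t : ℕ} (hdt : d ≤ t) (ht : t < n) :
    reverseSegment d ((t : ZMod n) + 1) = (t : ZMod n) + 1 := by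
  refine reverseSegment_eq_self ?_
  rw [← Nat.cast_add_one, ZMod.val_natCast]
  rcases (show t + 1 < n ∨ t + 1 = n by omega) with h | h
  · rw [Nat.mod_eq_of_lt h]; omega
  · rw [h, Nat.mod_self]; omega

theorem reverseSegment_involutive [NeZero n] {d : ℕ} (hd : d < n) :
    Function.Involutive (reverseSegment (n := n) d) := by
  intro k
  by_cases hk : 1 ≤ k.val ∧ k.val ≤ d
  · obtain ⟨t, ht, rfl⟩ : ∃ t < n, k = t := ⟨k.val, k.val_lt, k.natCast_zmod_val.symm⟩
    rw [ZMod.val_cast_of_lt ht] at hk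
    rw [reverseSegment_natCast hd hk.1 hk.2, reverseSegment_natCast hd (by omega) (by omega),
      Nat.sub_sub_self (by omega)]
  · rw [reverseSegment_eq_self (k := k) (by omega), reverseSegment_eq_self (by omega)]

def pathDists (c : ZMod n → α) (s len : ℕ) : Multiset ℝ :=
  (List.range' s len).map fun t : ℕ => dist (c t) (c (t + 1))

theorem cycleDists_eq_cons_cons (c : ZMod n → α) {d : ℕ} (hd : 1 ≤ d) (hdn : d < n) :
    cycleDists c = dist (c 0) (c 1) ::ₘ dist (c d) (c (d + 1)) ::ₘ
      (pathDists c 1 (d - 1) + pathDists c (d + 1) (n - (d + 1))) := by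
  obtain ⟨e, rfl⟩ : ∃ e, d = e + 1 := ⟨d - 1, by omega⟩
  obtain ⟨k, rfl⟩ : ∃ k, n = 0 + 1 + e + 1 + k := ⟨n - (e + 2), by omega⟩
  rw [cycleDists, Multiset.range, Multiset.map_coe, List.range_eq_range', ← List.range'_append_1,
    ← List.range'_append_1, ← List.range'_append_1]
  simp [pathDists, Nat.add_comm 1 e]

theorem pathDists_comp_reverseSegment_one {d : ℕ} (c : ZMod n → α) (hd : d < n) :
    pathDists (c ∘ reverseSegment d) 1 (d - 1) = pathDists c 1 (d - 1) := by
  have hreflect : (List.range' 1 (d - 1)).map (d - ·) = (List.range' 1 (d - 1)).reverse := by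
    rw [List.reverse_range', List.range'_eq_map_range, List.map_map]
    exact List.map_congr_left fun i _ => by simp only [Function.comp_apply]; omega
  have hedge : ∀ t ∈ List.range' 1 (d - 1),
      dist ((c ∘ reverseSegment d) t) ((c ∘ reverseSegment d) (t + 1)) =
        dist (c (d - t : ℕ)) (c ((d - t : ℕ) + 1)) := by
    intro t ht
    rw [List.mem_range'_1] at ht
    rw [Function.comp_apply, Function.comp_apply, ← Nat.cast_add_one,
      reverseSegment_natCast hd (by omega) (by omega),
      reverseSegment_natCast hd (by omega) (by omega), dist_comm, ← Nat.cast_add_one,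
      show d + 1 - (t + 1) = d - t by omega, show d + 1 - t = d - t + 1 by omega]
  rw [pathDists, List.map_congr_left hedge,
    ← Function.comp_def (fun t : ℕ => dist (c t) (c (t + 1))), ← List.map_map, hreflect,
    List.map_reverse, Multiset.coe_reverse, pathDists]

theorem pathDists_comp_reverseSegment_of_lt {d s len : ℕ} (c : ZMod n → α) (hds : d < s)
    (hn : s + len ≤ n) : pathDists (c ∘ reverseSegment d) s len = pathDists c s len := by
  refine congrArg _ (List.map_congr_left fun t ht => ?_)
  rw [List.mem_range'_1] at ht
  rw [Function.comp_apply, Function.comp_apply,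
    reverseSegment_natCast_add_one (by omega) (by omega),
    reverseSegment_eq_self (by rw [ZMod.val_cast_of_lt (by omega)]; omega)]

theorem exists_bijective_cycleDists_exchange_zero [NeZero n] (c : ZMod n → α) {b : ZMod n}
    (hb : b ≠ 0) :
    ∃ σ : ZMod n → ZMod n, σ.Bijective ∧ ∃ R : Multiset ℝ,
      cycleDists (c ∘ σ) = dist (c 0) (c b) ::ₘ dist (c 1) (c (b + 1)) ::ₘ R ∧
      cycleDists c = dist (c 0) (c 1) ::ₘ dist (c b) (c (b + 1)) ::ₘ R := by
  obtain ⟨d, hdn, rfl⟩ : ∃ d < n, b = (d : ZMod n) := ⟨b.val, b.val_lt, b.natCast_zmod_val.symm⟩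
  have hd : 1 ≤ d := Nat.one_le_iff_ne_zero.mpr (by rintro rfl; exact hb Nat.cast_zero)
  have h₀ : reverseSegment d (0 : ZMod n) = 0 := reverseSegment_eq_self (by simp)
  have h₁ : reverseSegment d (1 : ZMod n) = d := by
    simpa using reverseSegment_natCast (t := 1) hdn le_rfl hd
  have h_d : reverseSegment d (d : ZMod n) = 1 := by
    simpa using reverseSegment_natCast hdn hd le_rfl
  refine ⟨reverseSegment d, (reverseSegment_involutive hdn).bijective, _, ?_,
    cycleDists_eq_cons_cons c hd hdn⟩
  rw [cycleDists_eq_cons_cons _ hd hdn, pathDists_comp_reverseSegment_one c hdn,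
    pathDists_comp_reverseSegment_of_lt c d.lt_add_one (by omega)]
  simp only [Function.comp_apply, h₀, h₁, h_d, reverseSegment_natCast_add_one le_rfl hdn]

theorem exists_bijective_cycleDists_exchange [NeZero n] (c : ZMod n → α) {a b : ZMod n}
    (hab : b ≠ a) :
    ∃ σ : ZMod n → ZMod n, σ.Bijective ∧ ∃ R : Multiset ℝ,
      cycleDists (c ∘ σ) = dist (c a) (c b) ::ₘ dist (c (a + 1)) (c (b + 1)) ::ₘ R ∧
      cycleDists c = dist (c a) (c (a + 1)) ::ₘ dist (c b) (c (b + 1)) ::ₘ R := by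
  obtain ⟨σ, hσ, R, hnew, hold⟩ :=
    exists_bijective_cycleDists_exchange_zero (fun k => c (k + a)) (sub_ne_zero.mpr hab)
  simp only [Function.comp_def, zero_add, sub_add_cancel, add_comm 1 a,
    show b - a + 1 + a = b + 1 by abel] at hnew hold
  refine ⟨fun k => σ (k - a) + a,
    (Equiv.addRight a).bijective.comp (hσ.comp (Equiv.subRight a).bijective), R, ?_, ?_⟩
  · rw [← hnew, ← cycleDists_comp_add_right (fun k => c (σ k + a)) (-a)]
    simp only [Function.comp_def, sub_eq_add_neg]
  · rwa [← cycleDists_comp_add_right c a]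

end Cycles

theorem dseq_eq_sort_cycleDists (S : Finset (EuclideanSpace ℝ (Fin 2)))
    (c : ZMod S.card → EuclideanSpace ℝ (Fin 2)) :
    dseq S c = (cycleDists c).sort (· ≥ ·) := by
  -- in `dseq`, the cast `(i : ℕ)` coerces the whole list `List.finRange S.card` to `List ℕ`
  have hrange : (do let i ← List.finRange S.card; pure (i : ℕ)) = List.range S.card := by
    simp only [List.pure_def, List.bind_eq_flatMap, ← List.map_eq_flatMap]
    exact List.ext_getElem (by simp) fun i _ _ => by simp
  rw [dseq, hrange, cycleDists, Multiset.range, Multiset.map_coe, Multiset.coe_sort,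
    List.mergeSort_eq_insertionSort]

theorem dist_lt_two_of_norm_le_one {E : Type*} [NormedAddCommGroup E] [InnerProductSpace ℝ E]
    {u y : E} (hu : ‖u‖ ≤ 1) (hy : ‖y‖ ≤ 1) (huy : u ≠ -y) : dist u y < 2 := by
  rw [dist_eq_norm]
  have hpar := parallelogram_law_with_norm ℝ u y
  have hpos : 0 < ‖u + y‖ := norm_pos_iff.mpr fun h => huy (eq_neg_of_add_eq_zero_left h)
  nlinarith [norm_nonneg u, norm_nonneg y, norm_nonneg (u - y)]

theorem stmt_9_general (S : Finset (EuclideanSpace ℝ (Fin 2)))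
    (m : ZMod S.card → EuclideanSpace ℝ (Fin 2)) (hm : IsMinHamCycle S m)
    (x y : EuclideanSpace ℝ (Fin 2))
    (hx : x = (EuclideanSpace.equiv (Fin 2) ℝ).symm ![-1, 0])
    (hy : y = (EuclideanSpace.equiv (Fin 2) ℝ).symm ![1, 0])
    (i₀ : ZMod S.card) (hix : m i₀ = x) (hiy : m (i₀ + 1) = y)
    (u : EuclideanSpace ℝ (Fin 2)) (hu1 : ‖u‖ ≤ 1)
    (hux : u ≠ x) (huy : u ≠ y)
    (j : ZMod S.card) (hju : m j = u)
    (s : EuclideanSpace ℝ (Fin 2)) (hs : s = m (j - 1)) :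
    dist s x ≥ dist s u ∧ dist s x ≥ 2 := by
  have : NeZero S.card := ⟨(Finset.card_pos.mpr ⟨_, hm.1.2 0⟩).ne'⟩
  have hxy : x = -y := by subst hx hy; ext i; fin_cases i <;> simp
  have hy₁ : ‖y‖ = 1 := by subst hy; simp [EuclideanSpace.norm_eq, Fin.sum_univ_two]
  have hdist_xy : dist x y = 2 := by
    rw [hxy, dist_eq_norm, ← neg_add', norm_neg, ← two_smul ℝ, norm_smul, hy₁]
    norm_num
  have hu : m (j - 1 + 1) = u := by rw [sub_add_cancel, hju]
  obtain ⟨σ, hσ, R, hnew, hold⟩ := exists_bijective_cycleDists_exchange m (a := j - 1) (b := i₀)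
    fun h => huy (by rw [← hu, ← hiy, h])
  have hmin := hm.2 _ ⟨hm.1.1.comp hσ.injective, fun k => hm.1.2 (σ k)⟩
  rw [dseq_eq_sort_cycleDists, dseq_eq_sort_cycleDists, hnew, hold, ← hs, hu, hix, hiy,
    hdist_xy] at hmin
  have hmax : max (dist s u) 2 ≤ max (dist s x) (dist u y) :=
    not_lt.mp fun h => hmin (Multiset.lex_sort_ge_cons_cons_of_max_lt h R)
  have huy₂ : dist u y < 2 := dist_lt_two_of_norm_le_one hu1 hy₁.le (hxy ▸ hux)
  have hsx₂ : 2 ≤ dist s x :=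
    (le_max_iff.mp ((le_max_right _ _).trans hmax)).resolve_right huy₂.not_ge
  rw [max_eq_left (huy₂.le.trans hsx₂)] at hmax
  exact ⟨(le_max_left _ _).trans hmax, hsx₂⟩

theorem stmt_9 (S : Finset (EuclideanSpace ℝ (Fin 2))) (hS : 3 ≤ S.card)
    (m : ZMod S.card → EuclideanSpace ℝ (Fin 2)) (hm : IsMinHamCycle S m)
    (x y : EuclideanSpace ℝ (Fin 2))
    (hx : x = (EuclideanSpace.equiv (Fin 2) ℝ).symm ![-1, 0])
    (hy : y = (EuclideanSpace.equiv (Fin 2) ℝ).symm ![1, 0])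
    (i₀ : ZMod S.card) (hix : m i₀ = x) (hiy : m (i₀ + 1) = y)
    (u : EuclideanSpace ℝ (Fin 2)) (huS : u ∈ S) (hu1 : ‖u‖ ≤ 1)
    (hux : u ≠ x) (huy : u ≠ y)
    (j : ZMod S.card) (hju : m j = u)
    (s : EuclideanSpace ℝ (Fin 2)) (hs : s = m (j - 1)) (hsy : s ≠ y) :
    dist s x ≥ dist s u ∧ dist s x ≥ 2 :=
  stmt_9_general S m hm x y hx hy i₀ hix hiy u hu1 hux huy j hju s hs

end
end

section
/- Let x = (-1,0), y = (1,0), o = (0,0), and let s₁, …, s_κ be points in the plane such that: (a) dist(s_i, x) ≥ 2 for all i; (b) dist(s_i, s_j) ≥ 2 for all i ≠ j; (c) for each i there is a point u_i with ‖u_i‖ ≤ 1, dist(s_i, x) ≥ dist(s_i, u_i), and dist(s_i, s_j) ≥ max(dist(s_i,u_i), dist(s_j,u_j)) for i ≠ j. Define p_i = s_i if ‖s_i‖ ≤ 3 and p_i = 3·s_i/‖s_i‖ otherwise, and p_0 = x. Then dist(p_i, p_j) ≥ 2 for all 0 ≤ i < j ≤ κ. -/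
/-!
Points of norm at most 3 are kept, so pairs inside the disk of radius 3 are handled by the
hypotheses directly. A point `b` outside moves by `‖b‖ - 3` towards the origin, while every
other point stays at distance at least `‖b‖ - 1` from it (its witness `u` lies in the unit
disk), so the triangle inequality leaves a gap of 2. For two points outside, the same
distance bound forces the angle between them to have cosine at most `7/9`, which is exactly
what separates their projections on the circle of radius 3 by 2. The point `x` fits the same
scheme, with itself as witness.
-/

open InnerProductGeometry

lemma norm_sub_one_le_dist {E : Type*} [SeminormedAddCommGroup E] {v w : E} (hw : ‖w‖ ≤ 1) :
    ‖v‖ - 1 ≤ dist v w := by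
  rw [dist_eq_norm]
  linarith [norm_sub_norm_le v w]

section radialClip

variable {E : Type*} [NormedAddCommGroup E] [NormedSpace ℝ E]

noncomputable def radialClip (r : ℝ) (v : E) : E :=
  if ‖v‖ ≤ r then v else (r / ‖v‖) • v

lemma radialClip_of_norm_le {r : ℝ} {v : E} (h : ‖v‖ ≤ r) : radialClip r v = v := if_pos h

lemma radialClip_of_lt_norm {r : ℝ} {v : E} (h : r < ‖v‖) :
    radialClip r v = (r / ‖v‖) • v := if_neg h.not_ge

lemma norm_radialClip_of_lt_norm {r : ℝ} {v : E} (hr : 0 ≤ r) (h : r < ‖v‖) :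
    ‖radialClip r v‖ = r := by
  have hv : 0 < ‖v‖ := hr.trans_lt h
  rw [radialClip_of_lt_norm h, norm_smul, Real.norm_of_nonneg (by positivity),
    div_mul_cancel₀ r hv.ne']

lemma dist_radialClip_of_lt_norm {r : ℝ} {v : E} (hr : 0 ≤ r) (h : r < ‖v‖) :
    dist v (radialClip r v) = ‖v‖ - r := by
  have hv : 0 < ‖v‖ := hr.trans_lt h
  have hsub : v - (r / ‖v‖) • v = (1 - r / ‖v‖) • v := by rw [sub_smul, one_smul]
  rw [radialClip_of_lt_norm h, dist_eq_norm, hsub, norm_smul,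
    Real.norm_of_nonneg (by rw [sub_nonneg, div_le_one hv]; exact h.le)]
  field_simp

lemma two_le_dist_radialClip_three {a b : E} (hb : 3 < ‖b‖) (hab : ‖b‖ - 1 ≤ dist a b) :
    2 ≤ dist a (radialClip 3 b) := by
  have := dist_radialClip_of_lt_norm (by norm_num) hb
  linarith [dist_triangle a (radialClip 3 b) b, dist_comm b (radialClip 3 b)]

end radialClip

section angle

variable {E : Type*} [NormedAddCommGroup E] [InnerProductSpace ℝ E]

lemma cos_angle_le_of_norm_sub_one_le_dist {a b : E} (ha : 3 ≤ ‖a‖) (hab : ‖a‖ ≤ ‖b‖)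
    (hd : ‖b‖ - 1 ≤ dist a b) : Real.cos (angle a b) ≤ 7 / 9 := by
  have hlaw := norm_sub_sq_eq_norm_sq_add_norm_sq_sub_two_mul_norm_mul_norm_mul_cos_angle a b
  rw [← dist_eq_norm] at hlaw
  have hsq : (‖b‖ - 1) ^ 2 ≤ dist a b ^ 2 := pow_le_pow_left₀ (by linarith) hd 2
  have hprod : 0 < ‖a‖ * ‖b‖ := mul_pos (by linarith) (by linarith)
  -- `9 ‖a‖² + 18 ‖b‖ - 9 ≤ 14 ‖a‖ ‖b‖` splits as these two nonnegative products.
  nlinarith [mul_nonneg (sub_nonneg.2 hab) (by linarith : (0:ℝ) ≤ 14 * ‖a‖ - 18),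
    mul_nonneg (by linarith : (0:ℝ) ≤ 5 * ‖a‖ - 3) (by linarith : (0:ℝ) ≤ ‖a‖ - 3)]

lemma two_le_dist_of_norm_eq_three {a b : E} (ha : ‖a‖ = 3) (hb : ‖b‖ = 3)
    (hcos : Real.cos (angle a b) ≤ 7 / 9) : 2 ≤ dist a b := by
  have hlaw := norm_sub_sq_eq_norm_sq_add_norm_sq_sub_two_mul_norm_mul_norm_mul_cos_angle a b
  rw [← dist_eq_norm, ha, hb] at hlaw
  nlinarith [dist_nonneg (x := a) (y := b)]

lemma two_le_dist_radialClip_three_radialClip_three_of_lt_norm {a b : E}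
    (ha : 3 < ‖a‖) (hb : 3 < ‖b‖) (hda : ‖a‖ - 1 ≤ dist a b) (hdb : ‖b‖ - 1 ≤ dist a b) :
    2 ≤ dist (radialClip 3 a) (radialClip 3 b) := by
  have hcos : Real.cos (angle a b) ≤ 7 / 9 := by
    rcases le_total ‖a‖ ‖b‖ with hab | hba
    · exact cos_angle_le_of_norm_sub_one_le_dist ha.le hab hdb
    · rw [angle_comm]
      exact cos_angle_le_of_norm_sub_one_le_dist hb.le hba (dist_comm a b ▸ hda)
  apply two_le_dist_of_norm_eq_three (norm_radialClip_of_lt_norm (by norm_num) ha)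
    (norm_radialClip_of_lt_norm (by norm_num) hb)
  rwa [radialClip_of_lt_norm ha, radialClip_of_lt_norm hb,
    angle_smul_left_of_pos _ _ (by positivity), angle_smul_right_of_pos _ _ (by positivity)]

lemma two_le_dist_radialClip_three_radialClip_three {a b : E} (h : 2 ≤ dist a b)
    (hda : ‖a‖ - 1 ≤ dist a b) (hdb : ‖b‖ - 1 ≤ dist a b) :
    2 ≤ dist (radialClip 3 a) (radialClip 3 b) := by
  by_cases ha : ‖a‖ ≤ 3 <;> by_cases hb : ‖b‖ ≤ 3
  · rwa [radialClip_of_norm_le ha, radialClip_of_norm_le hb]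
  · rw [radialClip_of_norm_le ha]
    exact two_le_dist_radialClip_three (not_le.1 hb) hdb
  · rw [radialClip_of_norm_le hb, dist_comm]
    exact two_le_dist_radialClip_three (not_le.1 ha) (dist_comm a b ▸ hda)
  · exact two_le_dist_radialClip_three_radialClip_three_of_lt_norm (not_le.1 ha) (not_le.1 hb)
      hda hdb

end angle

theorem stmt_12_general (κ : ℕ)
    (x : EuclideanSpace ℝ (Fin 2))
    (hx : x = (EuclideanSpace.equiv (Fin 2) ℝ).symm ![-1, 0])
    (s u p : Fin κ → EuclideanSpace ℝ (Fin 2))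
    (ha : ∀ i, dist (s i) x ≥ 2)
    (hb : ∀ i j, i ≠ j → dist (s i) (s j) ≥ 2)
    (hu : ∀ i, ‖u i‖ ≤ 1)
    (hss : ∀ i j, i ≠ j →
      dist (s i) (s j) ≥ max (dist (s i) (u i)) (dist (s j) (u j)))
    (hp : ∀ i, p i = if ‖s i‖ ≤ 3 then s i else (3 / ‖s i‖) • s i) :
    (∀ i, dist x (p i) ≥ 2) ∧ ∀ i j, i ≠ j → dist (p i) (p j) ≥ 2 := by
  have hx1 : ‖x‖ = 1 := by
    subst hx
    simp [EuclideanSpace.norm_eq, Fin.sum_univ_two]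
  have hp : ∀ i, p i = radialClip 3 (s i) := hp
  refine ⟨fun i => ?_, fun i j hij => ?_⟩
  · have hxs : 2 ≤ dist x (s i) := dist_comm x (s i) ▸ ha i
    have := two_le_dist_radialClip_three_radialClip_three hxs (by linarith)
      (dist_comm x (s i) ▸ norm_sub_one_le_dist hx1.le)
    rwa [radialClip_of_norm_le (by linarith), ← hp i] at this
  · obtain ⟨hi, hj⟩ := max_le_iff.1 (hss i j hij)
    rw [hp i, hp j]
    refine two_le_dist_radialClip_three_radialClip_three (hb i j hij) ?_ ?_
    · exact (norm_sub_one_le_dist (hu i)).trans hi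
    · exact (norm_sub_one_le_dist (hu j)).trans (dist_comm (s i) (s j) ▸ hj)

theorem stmt_12 (κ : ℕ)
    (x : EuclideanSpace ℝ (Fin 2))
    (hx : x = (EuclideanSpace.equiv (Fin 2) ℝ).symm ![-1, 0])
    (s u p : Fin κ → EuclideanSpace ℝ (Fin 2))
    (ha : ∀ i, dist (s i) x ≥ 2)
    (hb : ∀ i j, i ≠ j → dist (s i) (s j) ≥ 2)
    (hu : ∀ i, ‖u i‖ ≤ 1)
    (hsu : ∀ i, dist (s i) x ≥ dist (s i) (u i))
    (hss : ∀ i j, i ≠ j →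
      dist (s i) (s j) ≥ max (dist (s i) (u i)) (dist (s j) (u j)))
    (hp : ∀ i, p i = if ‖s i‖ ≤ 3 then s i else (3 / ‖s i‖) • s i) :
    (∀ i, dist x (p i) ≥ 2) ∧ ∀ i j, i ≠ j → dist (p i) (p j) ≥ 2 :=
  stmt_12_general κ x hx s u p ha hb hu hss hp
end

section
/- There exists a finite point set S in the plane such that the 1-Gabriel graph of S is not Hamiltonian. Concretely, there is a set S of points such that the graph on S in which two points p, q are adjacent iff the closed disk with diameter pq contains at most 3 points of S (including p and q, i.e., at most 1 other point) has no Hamiltonian cycle. -/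
open Metric
open scoped Classical

noncomputable section

/-- `p` and `q` are adjacent in the `k`-Gabriel graph of `S`: the closed disk with
diameter `pq` contains at most `k` points of `S \ {p, q}`. -/
def kGGAdj (k : ℕ) (S : Finset (EuclideanSpace ℝ (Fin 2)))
    (p q : EuclideanSpace ℝ (Fin 2)) : Prop :=
  p ∈ S ∧ q ∈ S ∧ p ≠ q ∧
    (S.filter (fun r => r ≠ p ∧ r ≠ q ∧
      r ∈ closedBall (midpoint ℝ p q) (dist p q / 2))).card ≤ k

/-- The `k`-Gabriel graph of `S` is Hamiltonian. -/
def kGGHamiltonian (k : ℕ) (S : Finset (EuclideanSpace ℝ (Fin 2))) : Prop :=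
  ∃ c, IsHamCycle S c ∧ ∀ i : ZMod S.card, kGGAdj k S (c i) (c (i + 1))

/-!
Take three points (the leaves) and two further points (the blockers) lying in the diametral
disk of every pair of leaves. Then no two leaves are adjacent in the 1-Gabriel graph, so in a
Hamiltonian cycle every leaf is followed by a blocker; since the successor map is injective,
three leaves cannot be followed by only two blockers.
-/

open Finset

theorem mem_closedBall_midpoint_iff_inner_nonpos {E : Type*} [NormedAddCommGroup E]
    [InnerProductSpace ℝ E] (p q r : E) :
    r ∈ closedBall (midpoint ℝ p q) (dist p q / 2) ↔ inner ℝ (r - p) (r - q) ≤ 0 := by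
  have hr : r - midpoint ℝ p q = (2⁻¹ : ℝ) • ((r - p) + (r - q)) := by
    rw [midpoint_eq_smul_add, invOf_eq_inv]; module
  have hpq : p - q = (r - q) - (r - p) := by abel
  rw [mem_closedBall, dist_eq_norm, dist_eq_norm, hr, hpq, norm_smul, norm_inv, Real.norm_two,
    inv_mul_eq_div, div_le_div_iff_of_pos_right two_pos, ← sq_le_sq₀ (by positivity) (by positivity)]
  generalize r - p = a, r - q = b
  rw [norm_add_sq_real, norm_sub_sq_real, real_inner_comm b]
  constructor <;> intro h <;> linarith

theorem Finset.card_le_card_of_succ_mem {ι α : Type*} {c : ι → α} (hc : Function.Injective c)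
    {σ : ι → ι} (hσ : Function.Injective σ) {L B : Finset α} (hL : (L : Set α) ⊆ Set.range c)
    (hsucc : ∀ i, c i ∈ L → c (σ i) ∈ B) : #L ≤ #B :=
  calc #L = #(L.preimage c hc.injOn) := by
        rw [card_preimage, filter_true_of_mem fun p hp => hL hp]
    _ ≤ #B := card_le_card_of_injOn (c ∘ σ) (fun i hi => hsucc i (mem_preimage.1 hi))
        (hc.comp hσ).injOn

theorem IsHamCycle.exists_eq {S : Finset (EuclideanSpace ℝ (Fin 2))}
    {c : ZMod S.card → EuclideanSpace ℝ (Fin 2)} (hc : IsHamCycle S c) {p : EuclideanSpace ℝ (Fin 2)}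
    (hp : p ∈ S) : ∃ i, c i = p := by
  have : NeZero S.card := ⟨(card_pos.2 ⟨p, hp⟩).ne'⟩
  have himage : univ.image c = S :=
    eq_of_subset_of_card_le (fun q hq => by obtain ⟨i, -, rfl⟩ := mem_image.1 hq; exact hc.2 i)
      (by rw [card_image_of_injective _ hc.1, card_univ, ZMod.card])
  obtain ⟨i, -, hi⟩ := mem_image.1 (himage ▸ hp)
  exact ⟨i, hi⟩

theorem card_le_card_sdiff_of_kGGHamiltonian {k : ℕ} {S L : Finset (EuclideanSpace ℝ (Fin 2))}
    (hS : kGGHamiltonian k S) (hLS : L ⊆ S) (hL : ∀ p ∈ L, ∀ q ∈ L, ¬ kGGAdj k S p q) :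
    #L ≤ #(S \ L) := by
  obtain ⟨c, hc, hadj⟩ := hS
  refine card_le_card_of_succ_mem hc.1 (add_left_injective 1) (fun p hp => hc.exists_eq (hLS hp))
    fun i hi => mem_sdiff.2 ⟨(hadj i).2.1, fun h => hL _ hi _ h (hadj i)⟩

theorem not_kGGAdj_of_lt_card {k : ℕ} {S : Finset (EuclideanSpace ℝ (Fin 2))}
    {p q : EuclideanSpace ℝ (Fin 2)} (R : Finset (EuclideanSpace ℝ (Fin 2))) (hRS : R ⊆ S)
    (hR : k < #R) (hp : p ∉ R) (hq : q ∉ R)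
    (hdisk : ∀ r ∈ R, r ∈ closedBall (midpoint ℝ p q) (dist p q / 2)) : ¬ kGGAdj k S p q := by
  rintro ⟨-, -, -, hcard⟩
  have hsub : R ⊆ S.filter (fun r => r ≠ p ∧ r ≠ q ∧
      r ∈ closedBall (midpoint ℝ p q) (dist p q / 2)) := fun r hr =>
    mem_filter.2 ⟨hRS hr, ne_of_mem_of_not_mem hr hp, ne_of_mem_of_not_mem hr hq, hdisk r hr⟩
  exact (hR.trans_le ((card_le_card hsub).trans hcard)).false

def leaves : Finset (EuclideanSpace ℝ (Fin 2)) := {!₂[1, 0], !₂[-1, 2], !₂[-1, -2]}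

def blockers : Finset (EuclideanSpace ℝ (Fin 2)) := {!₂[1 / 2, 0], !₂[-1 / 2, 0]}

lemma card_leaves : #leaves = 3 := by
  rw [leaves, card_eq_three]
  refine ⟨_, _, _, ?_, ?_, ?_, rfl⟩ <;> norm_num

lemma card_blockers : #blockers = 2 := by
  rw [blockers, card_pair]; norm_num

lemma disjoint_leaves_blockers : Disjoint leaves blockers := by
  refine disjoint_left.2 fun p hp hpb => ?_
  have hp0 : |p 0| = 1 := by
    simp only [leaves, mem_insert, mem_singleton] at hp
    rcases hp with rfl | rfl | rfl <;> simp
  simp only [blockers, mem_insert, mem_singleton] at hpb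
  rcases hpb with rfl | rfl <;> norm_num at hp0

lemma inner_nonpos_of_mem_blockers {p q z : EuclideanSpace ℝ (Fin 2)} (hp : p ∈ leaves)
    (hq : q ∈ leaves) (hpq : p ≠ q) (hz : z ∈ blockers) : inner ℝ (z - p) (z - q) ≤ 0 := by
  simp only [leaves, blockers, mem_insert, mem_singleton] at hp hq hz
  rcases hp with rfl | rfl | rfl <;> rcases hq with rfl | rfl | rfl <;>
    first
    | exact absurd rfl hpq
    | rcases hz with rfl | rfl <;> simp [PiLp.inner_apply, Fin.sum_univ_two] <;> norm_num

lemma not_kGGAdj_of_mem_leaves {p q : EuclideanSpace ℝ (Fin 2)} (hp : p ∈ leaves)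
    (hq : q ∈ leaves) : ¬ kGGAdj 1 (leaves ∪ blockers) p q := fun hadj =>
  not_kGGAdj_of_lt_card blockers subset_union_right (by rw [card_blockers]; norm_num)
    (disjoint_left.1 disjoint_leaves_blockers hp) (disjoint_left.1 disjoint_leaves_blockers hq)
    (fun _ hz => (mem_closedBall_midpoint_iff_inner_nonpos _ _ _).2
      (inner_nonpos_of_mem_blockers hp hq hadj.2.2.1 hz)) hadj

theorem stmt_16 :
    ∃ S : Finset (EuclideanSpace ℝ (Fin 2)), 3 ≤ S.card ∧ ¬ kGGHamiltonian 1 S := by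
  refine ⟨leaves ∪ blockers, card_leaves ▸ card_le_card subset_union_left, fun hham => ?_⟩
  have h := card_le_card_sdiff_of_kGGHamiltonian hham subset_union_left
    fun p hp q hq => not_kGGAdj_of_mem_leaves hp hq
  rw [union_sdiff_left, sdiff_eq_self_of_disjoint disjoint_leaves_blockers.symm, card_leaves,
    card_blockers] at h
  omega

end
end
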